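/- Let K ⊆ ℝ^m be a closed convex pointed cone with nonempty interior and e ∈ int(K). Then the Gerstewitz function G_e is Lipschitz continuous on ℝ^m. -/

import Mathlib

open Set RealInnerProductSpace

noncomputable def gerstewitz {m : ℕ} (K : Set (EuclideanSpace ℝ (Fin m)))
    (e : EuclideanSpace ℝ (Fin m)) (y : EuclideanSpace ℝ (Fin m)) : ℝ :=
  sInf {t : ℝ | t • e - y ∈ K}

/-!
Since `e` is an interior point of the cone `K`, every vector `v` is dominated by a multiple of `e`
proportional to its norm: `c ‖v‖ • e - v ∈ K`. Adding this to `t • e - z ∈ K` with `v = y - z`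
shows `G_e y ≤ G_e z + c ‖y - z‖`, so `G_e` is `c`-Lipschitz. When `-e ∈ K` the defining sets are
all of `ℝ` and `G_e` is identically `0` (Lean's value of `sInf univ`); otherwise domination of `-y`
bounds the set defining `G_e y` below by `-c ‖y‖`.
-/

section Cone

variable {E : Type*} [NormedAddCommGroup E] [NormedSpace ℝ E] {K : Set E}

theorem add_mem_of_convex_of_smul_mem (hconv : Convex ℝ K)
    (hcone : ∀ c : ℝ, 0 ≤ c → ∀ x ∈ K, c • x ∈ K) {x y : E} (hx : x ∈ K) (hy : y ∈ K) :
    x + y ∈ K := by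
  have hmid := hconv hx hy (by norm_num : (0 : ℝ) ≤ 1 / 2) (by norm_num : (0 : ℝ) ≤ 1 / 2)
    (by norm_num)
  convert hcone 2 zero_le_two _ hmid using 1
  module

theorem exists_nnreal_mul_norm_smul_sub_mem_of_mem_interior
    (hcone : ∀ c : ℝ, 0 ≤ c → ∀ x ∈ K, c • x ∈ K) {e : E} (he : e ∈ interior K) :
    ∃ c : NNReal, ∀ v : E, (c * ‖v‖) • e - v ∈ K := by
  obtain ⟨r, hr, hball⟩ := Metric.nhds_basis_closedBall.mem_iff.mp (mem_interior_iff_mem_nhds.mp he)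
  refine ⟨r⁻¹.toNNReal, fun v => ?_⟩
  rw [Real.coe_toNNReal _ (by positivity)]
  rcases eq_or_ne v 0 with rfl | hv
  · simpa using hcone 0 le_rfl e (interior_subset he)
  have hv' : 0 < ‖v‖ := norm_pos_iff.mpr hv
  have hmem : e - (r / ‖v‖) • v ∈ K := by
    apply hball
    rw [Metric.mem_closedBall, dist_eq_norm, sub_sub_cancel_left, norm_neg, norm_smul,
      Real.norm_of_nonneg (by positivity), div_mul_cancel₀ _ hv'.ne']
  convert hcone (‖v‖ / r) (by positivity) _ hmem using 1
  have hcancel : ‖v‖ / r * (r / ‖v‖) = 1 := by field_simp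
  rw [smul_sub, smul_smul, hcancel, one_smul, inv_mul_eq_div]

theorem smul_mem_of_mem_of_neg_mem (hcone : ∀ c : ℝ, 0 ≤ c → ∀ x ∈ K, c • x ∈ K) {e : E}
    (he : e ∈ K) (hne : -e ∈ K) (a : ℝ) : a • e ∈ K := by
  rcases le_total 0 a with ha | ha
  · exact hcone a ha e he
  · simpa using hcone (-a) (neg_nonneg.mpr ha) (-e) hne

end Cone

section Gerstewitz

variable {m : ℕ} {K : Set (EuclideanSpace ℝ (Fin m))} {e : EuclideanSpace ℝ (Fin m)} {c : ℝ}

theorem gerstewitz_eq_zero_of_neg_mem (hconv : Convex ℝ K)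
    (hcone : ∀ c : ℝ, 0 ≤ c → ∀ x ∈ K, c • x ∈ K) (hc : ∀ v, (c * ‖v‖) • e - v ∈ K)
    (he : e ∈ K) (hne : -e ∈ K) (y : EuclideanSpace ℝ (Fin m)) : gerstewitz K e y = 0 := by
  suffices {t : ℝ | t • e - y ∈ K} = univ by rw [gerstewitz, this, Real.sInf_univ]
  refine eq_univ_of_forall fun t => show t • e - y ∈ K from ?_
  have hsum := add_mem_of_convex_of_smul_mem hconv hcone (hc y)
    (smul_mem_of_mem_of_neg_mem hcone he hne (t - c * ‖y‖))
  convert hsum using 1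
  module

theorem neg_mul_norm_le_of_smul_sub_mem (hconv : Convex ℝ K)
    (hcone : ∀ c : ℝ, 0 ≤ c → ∀ x ∈ K, c • x ∈ K) (hc : ∀ v, (c * ‖v‖) • e - v ∈ K)
    (hne : -e ∉ K) {y : EuclideanSpace ℝ (Fin m)} {t : ℝ} (ht : t • e - y ∈ K) :
    -(c * ‖y‖) ≤ t := by
  by_contra! hlt
  have hsum : (t + c * ‖y‖) • e ∈ K := by
    convert add_mem_of_convex_of_smul_mem hconv hcone ht (hc (-y)) using 1
    rw [norm_neg]
    module
  refine hne ?_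
  convert hcone (-(t + c * ‖y‖))⁻¹ (by rw [inv_nonneg]; linarith) _ hsum using 1
  rw [smul_smul, inv_neg, neg_mul, inv_mul_cancel₀ (by linarith), neg_one_smul]

theorem add_mul_norm_sub_mem_of_smul_sub_mem (hconv : Convex ℝ K)
    (hcone : ∀ c : ℝ, 0 ≤ c → ∀ x ∈ K, c • x ∈ K) (hc : ∀ v, (c * ‖v‖) • e - v ∈ K)
    {y z : EuclideanSpace ℝ (Fin m)} {t : ℝ} (ht : t • e - z ∈ K) :
    (t + c * ‖y - z‖) • e - y ∈ K := by
  convert add_mem_of_convex_of_smul_mem hconv hcone ht (hc (y - z)) using 1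
  module

theorem gerstewitz_le_add_mul_dist (hconv : Convex ℝ K)
    (hcone : ∀ c : ℝ, 0 ≤ c → ∀ x ∈ K, c • x ∈ K) (hc : ∀ v, (c * ‖v‖) • e - v ∈ K)
    (hne : -e ∉ K) (y z : EuclideanSpace ℝ (Fin m)) :
    gerstewitz K e y ≤ gerstewitz K e z + c * dist y z := by
  rw [dist_eq_norm, ← sub_le_iff_le_add]
  refine le_csInf ⟨_, hc z⟩ fun t ht => sub_le_iff_le_add.mpr ?_
  exact csInf_le ⟨_, fun s hs => neg_mul_norm_le_of_smul_sub_mem hconv hcone hc hne hs⟩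
    (add_mul_norm_sub_mem_of_smul_sub_mem hconv hcone hc ht)

end Gerstewitz

theorem gerstewitz_lipschitz_general {m : ℕ} (K : Set (EuclideanSpace ℝ (Fin m)))
    (e : EuclideanSpace ℝ (Fin m))
    (hKconv : Convex ℝ K)
    (hKcone : ∀ (c : ℝ), 0 ≤ c → ∀ x ∈ K, c • x ∈ K)
    (he : e ∈ interior K) :
    ∃ L : NNReal, LipschitzWith L (gerstewitz K e) := by
  obtain ⟨c, hc⟩ := exists_nnreal_mul_norm_smul_sub_mem_of_mem_interior hKcone he
  refine ⟨c, ?_⟩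
  by_cases hne : -e ∈ K
  · have hzero : gerstewitz K e = fun _ => 0 :=
      funext (gerstewitz_eq_zero_of_neg_mem hKconv hKcone hc (interior_subset he) hne)
    rw [hzero]
    exact (LipschitzWith.const 0).weaken zero_le
  · exact LipschitzWith.of_le_add_mul c (gerstewitz_le_add_mul_dist hKconv hKcone hc hne)

theorem gerstewitz_lipschitz {m : ℕ} (K : Set (EuclideanSpace ℝ (Fin m)))
    (e : EuclideanSpace ℝ (Fin m))
    (hKclosed : IsClosed K) (hKconv : Convex ℝ K)
    (hKcone : ∀ (c : ℝ), 0 ≤ c → ∀ x ∈ K, c • x ∈ K)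
    (hKpointed : K ∩ (-K) = {0}) (he : e ∈ interior K) :
    ∃ L : NNReal, LipschitzWith L (gerstewitz K e) :=
  gerstewitz_lipschitz_general K e hKconv hKcone he
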